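/- Grounded sentences obey intuitionistic logic in ATM: let φ₁, …, φₙ be grounded sentences and let B(p₁, …, pₙ) be a propositional formula in variables p₁, …, pₙ which is a theorem of the intuitionistic propositional calculus. Then the sentence B(φ₁, …, φₙ), obtained by substituting φᵢ for pᵢ, is a theorem of ATM. -/
import Mathlib


namespace ATM

/-- Terms of ATM: built from ⊥̇ and constants L₁, L₂, … by the dotted
connectives ∧̇, ∨̇, →̇ and the dotted predicates Ȧ[·], Ṫ[·], Ṁ[·]. -/
inductive Term : Type
  | bot  : Term
  | L    : ℕ → Term
  | and  : Term → Term → Term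
  | or   : Term → Term → Term
  | imp  : Term → Term → Term
  | A    : Term → Term
  | T    : Term → Term
  | M    : Term → Term

/-- Sentences of ATM: built from ⊥, A[t], T[t], M[t] by ∧, ∨, →. -/
inductive Sentence : Type
  | bot  : Sentence
  | A    : Term → Sentence
  | T    : Term → Sentence
  | M    : Term → Sentence
  | and  : Sentence → Sentence → Sentence
  | or   : Sentence → Sentence → Sentence
  | imp  : Sentence → Sentence → Sentence

/-- ¬̇t abbreviates t →̇ ⊥̇. -/
def Term.neg (t : Term) : Term := Term.imp t Term.bot

/-- s ↔̇ t abbreviates (s →̇ t) ∧̇ (t →̇ s). -/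
def Term.iff (s t : Term) : Term := Term.and (Term.imp s t) (Term.imp t s)

/-- ¬φ abbreviates φ → ⊥. -/
def Sentence.neg (φ : Sentence) : Sentence := Sentence.imp φ Sentence.bot

/-- φ ↔ ψ abbreviates (φ → ψ) ∧ (ψ → φ). -/
def Sentence.iff (φ ψ : Sentence) : Sentence :=
  Sentence.and (Sentence.imp φ ψ) (Sentence.imp ψ φ)

/-- The canonical term φ̇ of a sentence φ, obtained by dotting every symbol. -/
def Sentence.dot : Sentence → Term
  | Sentence.bot     => Term.bot
  | Sentence.A t     => Term.A t
  | Sentence.T t     => Term.T t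
  | Sentence.M t     => Term.M t
  | Sentence.and φ ψ => Term.and φ.dot ψ.dot
  | Sentence.or φ ψ  => Term.or φ.dot ψ.dot
  | Sentence.imp φ ψ => Term.imp φ.dot ψ.dot

/-- Evaluation t̂ of a term t to a sentence, relative to an assignment
θ of a sentence θᵢ to each constant Lᵢ.  (The θᵢ may be chosen in any
manner; the theorems below hypothesize θ₁ = ¬T[L₁] and θ₂ = ¬A[L₂].) -/
def Term.eval (θ : ℕ → Sentence) : Term → Sentence
  | Term.bot     => Sentence.bot
  | Term.L i     => θ i
  | Term.A t     => Sentence.A t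
  | Term.T t     => Sentence.T t
  | Term.M t     => Sentence.M t
  | Term.and s t => Sentence.and (s.eval θ) (t.eval θ)
  | Term.or s t  => Sentence.or (s.eval θ) (t.eval θ)
  | Term.imp s t => Sentence.imp (s.eval θ) (t.eval θ)

/-- Grounded sentences: the smallest set of sentences containing ⊥, all A[t]
and all M[t], closed under ∧, ∨, →, and containing T[t] whenever t̂ is in
the set. -/
inductive Grounded (θ : ℕ → Sentence) : Sentence → Prop
  | bot : Grounded θ Sentence.bot
  | A (t : Term) : Grounded θ (Sentence.A t)
  | M (t : Term) : Grounded θ (Sentence.M t)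
  | and {φ ψ : Sentence} : Grounded θ φ → Grounded θ ψ → Grounded θ (Sentence.and φ ψ)
  | or {φ ψ : Sentence} : Grounded θ φ → Grounded θ ψ → Grounded θ (Sentence.or φ ψ)
  | imp {φ ψ : Sentence} : Grounded θ φ → Grounded θ ψ → Grounded θ (Sentence.imp φ ψ)
  | T {t : Term} : Grounded θ (t.eval θ) → Grounded θ (Sentence.T t)

/-- `HilbertAxT s t u a` : the term `a` is the instance `Ȧ(s,t,u)` at the
terms `s`, `t`, `u` of one of the axiom schemes `A` of a fixed standard
Hilbert-style axiomatization of intuitionistic propositional logic. -/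
inductive HilbertAxT : Term → Term → Term → Term → Prop
  | imp1 (s t u : Term) : HilbertAxT s t u (Term.imp s (Term.imp t s))
  | imp2 (s t u : Term) : HilbertAxT s t u
      (Term.imp (Term.imp s (Term.imp t u))
        (Term.imp (Term.imp s t) (Term.imp s u)))
  | andE1 (s t u : Term) : HilbertAxT s t u (Term.imp (Term.and s t) s)
  | andE2 (s t u : Term) : HilbertAxT s t u (Term.imp (Term.and s t) t)
  | andI (s t u : Term) : HilbertAxT s t u (Term.imp s (Term.imp t (Term.and s t)))
  | orI1 (s t u : Term) : HilbertAxT s t u (Term.imp s (Term.or s t))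
  | orI2 (s t u : Term) : HilbertAxT s t u (Term.imp t (Term.or s t))
  | orE (s t u : Term) : HilbertAxT s t u
      (Term.imp (Term.imp s u)
        (Term.imp (Term.imp t u) (Term.imp (Term.or s t) u)))
  | exfalso (s t u : Term) : HilbertAxT s t u (Term.imp Term.bot s)

/-- Theorems of ATM: the axioms (logical axioms and nonlogical schemes
(1)–(9)) closed under the three deduction rules (conjunction, modus
ponens, release). -/
inductive Thm (θ : ℕ → Sentence) : Sentence → Prop
  -- logical axioms: (M[s] ∧ M[t] ∧ M[u]) → A[Ȧ(s,t,u)]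
  | logical {s t u a : Term} (h : HilbertAxT s t u a) :
      Thm θ (Sentence.imp
        (Sentence.and (Sentence.and (Sentence.M s) (Sentence.M t)) (Sentence.M u))
        (Sentence.A a))
  -- (1) M[t] for t̂ grounded
  | ax1 {t : Term} (h : Grounded θ (t.eval θ)) : Thm θ (Sentence.M t)
  -- (2) (M[s] ∧ M[t]) ↔ M[s ∧̇ t] ↔ M[s ∨̇ t] ↔ M[s →̇ t]
  | ax2and (s t : Term) :
      Thm θ (Sentence.iff (Sentence.and (Sentence.M s) (Sentence.M t))
        (Sentence.M (Term.and s t)))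
  | ax2or (s t : Term) :
      Thm θ (Sentence.iff (Sentence.and (Sentence.M s) (Sentence.M t))
        (Sentence.M (Term.or s t)))
  | ax2imp (s t : Term) :
      Thm θ (Sentence.iff (Sentence.and (Sentence.M s) (Sentence.M t))
        (Sentence.M (Term.imp s t)))
  -- (3) A[t] → M[t]
  | ax3 (t : Term) : Thm θ (Sentence.imp (Sentence.A t) (Sentence.M t))
  -- (4) (A[s] ∧ A[t]) → A[s ∧̇ t]
  | ax4 (s t : Term) :
      Thm θ (Sentence.imp (Sentence.and (Sentence.A s) (Sentence.A t))
        (Sentence.A (Term.and s t)))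
  -- (5) (A[s] ∧ A[s →̇ t]) → A[t]
  | ax5 (s t : Term) :
      Thm θ (Sentence.imp (Sentence.and (Sentence.A s) (Sentence.A (Term.imp s t)))
        (Sentence.A t))
  -- (6) M[t] → A[t →̇ Ȧ[t]]
  | ax6 (t : Term) :
      Thm θ (Sentence.imp (Sentence.M t) (Sentence.A (Term.imp t (Term.A t))))
  -- (7) M[t] → A[t ↔̇ Ṫ[t]]
  | ax7 (t : Term) :
      Thm θ (Sentence.imp (Sentence.M t) (Sentence.A (Term.iff t (Term.T t))))
  -- (8) ¬M[t] → A[¬̇Ṫ[t]]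
  | ax8 (t : Term) :
      Thm θ (Sentence.imp (Sentence.neg (Sentence.M t))
        (Sentence.A (Term.neg (Term.T t))))
  -- (9) M[t] → A[t ↔̇ t'] whenever t̂ = t̂'
  | ax9 {t t' : Term} (h : t.eval θ = t'.eval θ) :
      Thm θ (Sentence.imp (Sentence.M t) (Sentence.A (Term.iff t t')))
  -- deduction rules
  | conj {φ ψ : Sentence} : Thm θ φ → Thm θ ψ → Thm θ (Sentence.and φ ψ)
  | mp {φ ψ : Sentence} : Thm θ φ → Thm θ (Sentence.imp φ ψ) → Thm θ ψ
  | release {t : Term} : Thm θ (Sentence.A t) → Thm θ (t.eval θ)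

/-- θ₁ is the classical liar sentence ¬T[L₁]. -/
def liar1 : Sentence := Sentence.neg (Sentence.T (Term.L 1))

/-- θ₂ is the assertible liar sentence ¬A[L₂]. -/
def liar2 : Sentence := Sentence.neg (Sentence.A (Term.L 2))


/-- Propositional formulas in variables of type `α`. -/
inductive PropForm (α : Type) : Type
  | var : α → PropForm α
  | bot : PropForm α
  | and : PropForm α → PropForm α → PropForm α
  | or  : PropForm α → PropForm α → PropForm α
  | imp : PropForm α → PropForm α → PropForm α

/-- Instances of the fixed standard Hilbert-style axiom schemes for the
intuitionistic propositional calculus. -/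
inductive IPCAx {α : Type} : PropForm α → Prop
  | imp1 (p q : PropForm α) : IPCAx (PropForm.imp p (PropForm.imp q p))
  | imp2 (p q r : PropForm α) : IPCAx
      (PropForm.imp (PropForm.imp p (PropForm.imp q r))
        (PropForm.imp (PropForm.imp p q) (PropForm.imp p r)))
  | andE1 (p q : PropForm α) : IPCAx (PropForm.imp (PropForm.and p q) p)
  | andE2 (p q : PropForm α) : IPCAx (PropForm.imp (PropForm.and p q) q)
  | andI (p q : PropForm α) : IPCAx (PropForm.imp p (PropForm.imp q (PropForm.and p q)))
  | orI1 (p q : PropForm α) : IPCAx (PropForm.imp p (PropForm.or p q))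
  | orI2 (p q : PropForm α) : IPCAx (PropForm.imp q (PropForm.or p q))
  | orE (p q r : PropForm α) : IPCAx
      (PropForm.imp (PropForm.imp p r)
        (PropForm.imp (PropForm.imp q r) (PropForm.imp (PropForm.or p q) r)))
  | exfalso (p : PropForm α) : IPCAx (PropForm.imp PropForm.bot p)

/-- Theoremhood in the intuitionistic propositional calculus (Hilbert
style: the axiom schemes above with modus ponens as the only rule). -/
inductive IPCThm {α : Type} : PropForm α → Prop
  | ax {p : PropForm α} : IPCAx p → IPCThm p
  | mp {p q : PropForm α} : IPCThm (PropForm.imp p q) → IPCThm p → IPCThm q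

/-- `Ḃ(t₁,…,tₙ)`: substitute the term `v i` for the variable `i` in `B`,
with each connective replaced by its dotted counterpart. -/
def PropForm.substT {α : Type} (v : α → Term) : PropForm α → Term
  | PropForm.var a => v a
  | PropForm.bot => Term.bot
  | PropForm.and p q => Term.and (p.substT v) (q.substT v)
  | PropForm.or p q => Term.or (p.substT v) (q.substT v)
  | PropForm.imp p q => Term.imp (p.substT v) (q.substT v)

/-- `B(φ₁,…,φₙ)`: substitute the sentence `v i` for the variable `i` in `B`. -/
def PropForm.substS {α : Type} (v : α → Sentence) : PropForm α → Sentence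
  | PropForm.var a => v a
  | PropForm.bot => Sentence.bot
  | PropForm.and p q => Sentence.and (p.substS v) (q.substS v)
  | PropForm.or p q => Sentence.or (p.substS v) (q.substS v)
  | PropForm.imp p q => Sentence.imp (p.substS v) (q.substS v)

lemma dot_eval (θ : ℕ → Sentence) : ∀ φ : Sentence, φ.dot.eval θ = φ := by
  intro φ
  induction φ <;> simp_all [Sentence.dot, Term.eval]

lemma substT_eval (θ : ℕ → Sentence) {α : Type} (v : α → Sentence)
    (B : PropForm α) :
    (B.substT (fun i => (v i).dot)).eval θ = B.substS v := by
  induction B <;> simp_all [PropForm.substT, PropForm.substS, Term.eval, dot_eval]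

lemma grounded_substS (θ : ℕ → Sentence) {α : Type} (v : α → Sentence)
    (hv : ∀ i, Grounded θ (v i)) (B : PropForm α) :
    Grounded θ (B.substS v) := by
  induction B with
  | var a => exact hv a
  | bot => exact Grounded.bot
  | and p q hp hq => exact Grounded.and hp hq
  | or p q hp hq => exact Grounded.or hp hq
  | imp p q hp hq => exact Grounded.imp hp hq

theorem atm_grounded_intuitionistic_logic (θ : ℕ → Sentence)
    (h1 : θ 1 = liar1) (h2 : θ 2 = liar2) :
    ∀ (n : ℕ) (v : Fin n → Sentence), (∀ i : Fin n, Grounded θ (v i)) →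
      ∀ B : PropForm (Fin n), IPCThm B → Thm θ (B.substS v) := by
  intro n v hv B hB
  set w : Fin n → Term := fun i => (v i).dot with hw
  have hM : ∀ C : PropForm (Fin n), Thm θ (Sentence.M (C.substT w)) := by
    intro C
    apply Thm.ax1
    rw [substT_eval]
    exact grounded_substS θ v hv C
  have key : ∀ C : PropForm (Fin n), IPCThm C → Thm θ (Sentence.A (C.substT w)) := by
    intro C hC
    induction hC with
    | @mp p q hpq hp ihpq ihp =>
        exact Thm.mp (Thm.conj ihp ihpq) (Thm.ax5 _ _)
    | @ax p hax =>
        cases hax with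
        | imp1 p q =>
            exact Thm.mp (Thm.conj (Thm.conj (hM p) (hM q)) (hM p))
              (Thm.logical (HilbertAxT.imp1 _ _ _))
        | imp2 p q r =>
            exact Thm.mp (Thm.conj (Thm.conj (hM p) (hM q)) (hM r))
              (Thm.logical (HilbertAxT.imp2 _ _ _))
        | andE1 p q =>
            exact Thm.mp (Thm.conj (Thm.conj (hM p) (hM q)) (hM p))
              (Thm.logical (HilbertAxT.andE1 _ _ _))
        | andE2 p q =>
            exact Thm.mp (Thm.conj (Thm.conj (hM p) (hM q)) (hM p))
              (Thm.logical (HilbertAxT.andE2 _ _ _))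
        | andI p q =>
            exact Thm.mp (Thm.conj (Thm.conj (hM p) (hM q)) (hM p))
              (Thm.logical (HilbertAxT.andI _ _ _))
        | orI1 p q =>
            exact Thm.mp (Thm.conj (Thm.conj (hM p) (hM q)) (hM p))
              (Thm.logical (HilbertAxT.orI1 _ _ _))
        | orI2 p q =>
            exact Thm.mp (Thm.conj (Thm.conj (hM p) (hM q)) (hM p))
              (Thm.logical (HilbertAxT.orI2 _ _ _))
        | orE p q r =>
            exact Thm.mp (Thm.conj (Thm.conj (hM p) (hM q)) (hM r))
              (Thm.logical (HilbertAxT.orE _ _ _))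
        | exfalso p =>
            exact Thm.mp (Thm.conj (Thm.conj (hM p) (hM p)) (hM p))
              (Thm.logical (HilbertAxT.exfalso _ _ _))
  have := Thm.release (key B hB)
  rwa [substT_eval] at this

end ATM
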